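/- With notation as above, any solution of d/dt (A,V) = M_ρ (A,V) satisfies L_ρ²(t) ≤ e^{−c₀ min(1, ρ²) t} L_ρ²(0) for all t ≥ 0, for some universal constant c₀ > 0 independent of ρ. -/

import Mathlib

open Complex

noncomputable section

/-- The Lyapunov functional `L_ρ² = 2|(A,V)|² + |ρA|² − 2ρ Re(A V̄)`. -/
def lyapunovSq (ρ : ℝ) (A V : ℝ → ℂ) (t : ℝ) : ℝ :=
  2 * (‖A t‖ ^ 2 + ‖V t‖ ^ 2) + ρ ^ 2 * ‖A t‖ ^ 2 -
    2 * ρ * (A t * (starRingEnd ℂ) (V t)).re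

/-!
Reading `Re(A V̄)` as the real inner product `⟪A, V⟫` on `ℂ`, the argument works in any real
inner product space. Along solutions, `d/dt L_ρ² = -2ρ² (‖A‖² + ‖V‖²)`, while
`L_ρ² ≤ (2 + 2ρ²) ‖A‖² + 3 ‖V‖²`, so `min(1, ρ²) L_ρ² ≤ 4ρ² (‖A‖² + ‖V‖²)`. Hence
`d/dt L_ρ² ≤ -½ min(1, ρ²) L_ρ²`, and Grönwall's inequality gives the decay with `c₀ = 1/2`.
-/

open scoped RealInnerProductSpace

theorem le_exp_mul_of_hasDerivAt_le_neg_mul {f f' : ℝ → ℝ} {k : ℝ}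
    (hf : ∀ t, HasDerivAt f (f' t) t) (hbound : ∀ t, f' t ≤ -k * f t) {t : ℝ} (ht : 0 ≤ t) :
    f t ≤ Real.exp (-k * t) * f 0 := by
  have h := le_gronwallBound_of_liminf_deriv_right_le (f' := f') (K := -k) (ε := 0) (b := t)
    (fun x _ => (hf x).continuousAt.continuousWithinAt)
    (fun x _ _ hr => (hf x).hasDerivWithinAt.liminf_right_slope_le hr) le_rfl
    (fun x _ => (add_zero (-k * f x)).symm ▸ hbound x) t ⟨ht, le_rfl⟩
  rwa [gronwallBound_ε0, sub_zero, mul_comm] at h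

section LyapunovForm

variable {E : Type*} [NormedAddCommGroup E] [InnerProductSpace ℝ E]

def lyapunovForm (ρ : ℝ) (a v : E) : ℝ :=
  2 * (‖a‖ ^ 2 + ‖v‖ ^ 2) + ρ ^ 2 * ‖a‖ ^ 2 - 2 * ρ * ⟪a, v⟫

theorem lyapunovForm_le (ρ : ℝ) (a v : E) :
    lyapunovForm ρ a v ≤ (2 + 2 * ρ ^ 2) * ‖a‖ ^ 2 + 3 * ‖v‖ ^ 2 := by
  have h := norm_add_sq_real (ρ • a) v
  rw [norm_smul, real_inner_smul_left, mul_pow, Real.norm_eq_abs, sq_abs] at h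
  rw [lyapunovForm]
  nlinarith [sq_nonneg ‖ρ • a + v‖]

theorem min_one_sq_mul_lyapunovForm_le (ρ : ℝ) (a v : E) :
    min 1 (ρ ^ 2) * lyapunovForm ρ a v ≤ 4 * ρ ^ 2 * (‖a‖ ^ 2 + ‖v‖ ^ 2) := by
  have h₁ := min_le_left 1 (ρ ^ 2)
  have h₂ := min_le_right 1 (ρ ^ 2)
  calc min 1 (ρ ^ 2) * lyapunovForm ρ a v
      ≤ min 1 (ρ ^ 2) * ((2 + 2 * ρ ^ 2) * ‖a‖ ^ 2 + 3 * ‖v‖ ^ 2) := by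
        gcongr
        exact lyapunovForm_le ρ a v
    _ ≤ 4 * ρ ^ 2 * (‖a‖ ^ 2 + ‖v‖ ^ 2) := by
        nlinarith [mul_le_mul_of_nonneg_right h₁ (sq_nonneg ρ),
          mul_le_mul_of_nonneg_right h₂ (sq_nonneg ‖a‖),
          mul_le_mul_of_nonneg_right h₂ (sq_nonneg ‖v‖)]

theorem hasDerivAt_lyapunovForm {ρ : ℝ} {A V : ℝ → E}
    (hA : ∀ t, HasDerivAt A (-ρ • V t) t) (hV : ∀ t, HasDerivAt V (ρ • A t - ρ ^ 2 • V t) t)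
    (t : ℝ) :
    HasDerivAt (fun s => lyapunovForm ρ (A s) (V s))
      (-2 * ρ ^ 2 * (‖A t‖ ^ 2 + ‖V t‖ ^ 2)) t := by
  have h := ((((hA t).norm_sq.add (hV t).norm_sq).const_mul 2).add
    ((hA t).norm_sq.const_mul (ρ ^ 2))).sub (((hA t).inner ℝ (hV t)).const_mul (2 * ρ))
  refine h.congr_deriv ?_
  simp only [inner_smul_right, inner_sub_right, inner_smul_left, real_inner_self_eq_norm_sq,
    real_inner_comm (A t) (V t), RCLike.conj_to_real]
  ring

theorem lyapunovForm_le_exp_mul {ρ : ℝ} {A V : ℝ → E}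
    (hA : ∀ t, HasDerivAt A (-ρ • V t) t) (hV : ∀ t, HasDerivAt V (ρ • A t - ρ ^ 2 • V t) t)
    {t : ℝ} (ht : 0 ≤ t) :
    lyapunovForm ρ (A t) (V t) ≤
      Real.exp (-(min 1 (ρ ^ 2) / 2) * t) * lyapunovForm ρ (A 0) (V 0) := by
  refine le_exp_mul_of_hasDerivAt_le_neg_mul (hasDerivAt_lyapunovForm hA hV) (fun s => ?_) ht
  linarith [min_one_sq_mul_lyapunovForm_le ρ (A s) (V s)]

end LyapunovForm

theorem lyapunovSq_eq_lyapunovForm (ρ : ℝ) (A V : ℝ → ℂ) (t : ℝ) :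
    lyapunovSq ρ A V t = lyapunovForm ρ (A t) (V t) := by
  rw [lyapunovSq, lyapunovForm, real_inner_comm, Complex.inner]

/-- **Exponential decay of the Lyapunov functional.** Any solution of
`d/dt (A,V) = M_ρ (A,V)` with `M_ρ = [[0, −ρ], [ρ, −ρ²]]` satisfies
`L_ρ²(t) ≤ e^{−c₀ min(1,ρ²) t} L_ρ²(0)` for all `t ≥ 0`, for a universal `c₀ > 0`
independent of `ρ`. -/
theorem lyapunov_exponential_decay :
    ∃ c₀ : ℝ, 0 < c₀ ∧
      ∀ ρ : ℝ, 0 ≤ ρ → ∀ A V : ℝ → ℂ,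
        (∀ t, HasDerivAt A (-(ρ : ℂ) * V t) t) →
        (∀ t, HasDerivAt V ((ρ : ℂ) * A t - (ρ : ℂ) ^ 2 * V t) t) →
        ∀ t : ℝ, 0 ≤ t →
          lyapunovSq ρ A V t ≤
            Real.exp (-c₀ * min 1 (ρ ^ 2) * t) * lyapunovSq ρ A V 0 := by
  refine ⟨1 / 2, by norm_num, fun ρ _ A V hA hV t ht => ?_⟩
  have hA' : ∀ s, HasDerivAt A (-ρ • V s) s := by
    simpa only [Complex.real_smul, Complex.ofReal_neg] using hA
  have hV' : ∀ s, HasDerivAt V (ρ • A s - ρ ^ 2 • V s) s := by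
    simpa only [Complex.real_smul, Complex.ofReal_pow] using hV
  rw [lyapunovSq_eq_lyapunovForm, lyapunovSq_eq_lyapunovForm,
    show -(1 / 2) * min 1 (ρ ^ 2) * t = -(min 1 (ρ ^ 2) / 2) * t by ring]
  exact lyapunovForm_le_exp_mul hA' hV' ht
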